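/- For every integer n ≥ 1, every α ∈ (0,1), and all r, s > 0, the mean coverage of the exact level-(1-α) Clopper–Pearson interval satisfies C(α, n, r, s) ≥ 1 − α. -/

import Mathlib

open MeasureTheory

/-- The Beta function `β(r,s) = ∫₀¹ t^(r-1) (1-t)^(s-1) dt`. -/
noncomputable def betaFun (r s : ℝ) : ℝ :=
  ∫ t in (0:ℝ)..1, t ^ (r - 1) * (1 - t) ^ (s - 1)

/-- The Beta(r,s) density `f(t;r,s) = t^(r-1)(1-t)^(s-1)/β(r,s)`. -/
noncomputable def betaPDF (r s t : ℝ) : ℝ :=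
  t ^ (r - 1) * (1 - t) ^ (s - 1) / betaFun r s

/-- The Beta(r,s) cumulative distribution function `∫₀ᵖ f(t;r,s) dt`. -/
noncomputable def betaCDF (r s p : ℝ) : ℝ :=
  ∫ t in (0:ℝ)..p, betaPDF r s t

/- The Beta quantile `B(q;r,s)`: the (unique, for `r,s>0`, `q∈(0,1)`) `t ∈ (0,1)`
with `∫₀ᵗ f(u;r,s) du = q`. -/
open Classical in
noncomputable def betaQuantile (r s q : ℝ) : ℝ :=
  if h : ∃ t, t ∈ Set.Ioo (0:ℝ) 1 ∧ betaCDF r s t = q then h.choose else 0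

/-- Lower Clopper–Pearson endpoint: `p_L(X,α) = B(α/2; X, n-X+1)` for `X ≥ 1`,
and `p_L(0,α) = 0`. -/
noncomputable def cpLower (n X : ℕ) (α : ℝ) : ℝ :=
  if X = 0 then 0 else betaQuantile (X : ℝ) ((n : ℝ) - X + 1) (α / 2)

/-- Upper Clopper–Pearson endpoint: `p_U(X,α) = B(1-α/2; X+1, n-X)` for `X ≤ n-1`,
and `p_U(n,α) = 1`. -/
noncomputable def cpUpper (n X : ℕ) (α : ℝ) : ℝ :=
  if X = n then 1 else betaQuantile ((X : ℝ) + 1) ((n : ℝ) - X) (1 - α / 2)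

/-- The binomial probability `b(X;n,p) = C(n,X) p^X (1-p)^(n-X)`. -/
noncomputable def binomPMF (n X : ℕ) (p : ℝ) : ℝ :=
  (n.choose X : ℝ) * p ^ X * (1 - p) ^ (n - X)

open Classical in
/-- The mean coverage `C(α,n,r,s)` of the level-(1-α) Clopper–Pearson interval with respect
to the Beta(r,s) density. -/
noncomputable def meanCoverage (α : ℝ) (n : ℕ) (r s : ℝ) : ℝ :=
  ∫ p in (0:ℝ)..1,
    (∑ X ∈ Finset.range (n + 1),
      (if cpLower n X α ≤ p ∧ p ≤ cpUpper n X α then binomPMF n X p else 0)) * betaPDF r s p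

/-! The Clopper–Pearson interval is exact: for every fixed `p ∈ [0, 1]` it covers `p` with
probability at least `1 - α`, so averaging against the Beta density gives mean coverage at least
`1 - α`.

Pointwise exactness rests on the identity `P_p(Bin(n, p) ≥ k) = I_p(k, n - k + 1)` between binomial
upper tails and Beta distribution functions: both vanish at `0`, and the derivative of the binomial
tail telescopes to `n b(k - 1; n - 1, p)`, a multiple of the Beta density. Hence `p_U(X) < p` forces
`P_p(Bin ≤ X) ≤ α/2` and `p < p_L(X)` forces `P_p(Bin ≥ X) ≤ α/2`. The outcomes whose interval lies
below `p` are contained in `{0, …, X}` for the largest such `X`, and those whose interval lies above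
`p` in `{X, …, n}` for the smallest such `X`, so each kind of miss has probability at most `α/2`. -/

open Finset Polynomial

noncomputable def binomTail (n k : ℕ) (p : ℝ) : ℝ :=
  ∑ j ∈ Ico k (n + 1), binomPMF n j p

lemma binomPMF_eq_eval_bernsteinPolynomial (n ν : ℕ) (p : ℝ) :
    binomPMF n ν p = (bernsteinPolynomial ℝ n ν).eval p := by
  simp [binomPMF, bernsteinPolynomial]

lemma continuous_binomPMF (n ν : ℕ) : Continuous (binomPMF n ν) := by
  unfold binomPMF; fun_prop

lemma binomPMF_nonneg (n ν : ℕ) {p : ℝ} (h0 : 0 ≤ p) (h1 : p ≤ 1) : 0 ≤ binomPMF n ν p := by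
  have : 0 ≤ 1 - p := by linarith
  unfold binomPMF; positivity

lemma sum_binomPMF (n : ℕ) (p : ℝ) : ∑ ν ∈ range (n + 1), binomPMF n ν p = 1 := by
  simp_rw [binomPMF_eq_eval_bernsteinPolynomial, ← eval_finsetSum, bernsteinPolynomial.sum,
    eval_one]

lemma binomPMF_eq_zero_of_lt {n ν : ℕ} (h : n < ν) (p : ℝ) : binomPMF n ν p = 0 := by
  simp [binomPMF, Nat.choose_eq_zero_of_lt h]

lemma hasDerivAt_binomPMF_succ (n ν : ℕ) (p : ℝ) :
    HasDerivAt (binomPMF (n + 1) (ν + 1))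
      ((n + 1) * (binomPMF n ν p - binomPMF n (ν + 1) p)) p := by
  rw [show binomPMF (n + 1) (ν + 1) = _ from funext (binomPMF_eq_eval_bernsteinPolynomial _ _)]
  simpa [binomPMF_eq_eval_bernsteinPolynomial, bernsteinPolynomial.derivative_succ_aux] using
    (bernsteinPolynomial ℝ (n + 1) (ν + 1)).hasDerivAt p

lemma sum_range_add_binomTail {n k : ℕ} (hk : k ≤ n + 1) (p : ℝ) :
    ∑ j ∈ range k, binomPMF n j p + binomTail n k p = 1 := by
  rw [binomTail, sum_range_add_sum_Ico _ hk, sum_binomPMF]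

lemma continuous_binomTail (n k : ℕ) : Continuous (binomTail n k) :=
  continuous_finsetSum _ fun j _ => continuous_binomPMF n j

lemma binomTail_zero {n k : ℕ} (hk : 0 < k) : binomTail n k 0 = 0 :=
  sum_eq_zero fun j hj => by
    simp [binomPMF_eq_eval_bernsteinPolynomial, bernsteinPolynomial.eval_at_0,
      (mem_Ico.mp hj).1.trans_lt' hk |>.ne']

lemma binomTail_one {n k : ℕ} (hk : k ≤ n) : binomTail n k 1 = 1 := by
  simp [binomTail, binomPMF_eq_eval_bernsteinPolynomial, bernsteinPolynomial.eval_at_1, hk]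

lemma hasDerivAt_binomTail_succ {n k : ℕ} (hk : k ≤ n) (p : ℝ) :
    HasDerivAt (binomTail (n + 1) (k + 1)) ((n + 1) * binomPMF n k p) p := by
  have htail : binomTail (n + 1) (k + 1) =
      fun q => ∑ j ∈ Ico k (n + 1), binomPMF (n + 1) (j + 1) q :=
    funext fun q => (sum_Ico_add' _ _ _ _).symm
  have htel : ∑ j ∈ Ico k (n + 1), (binomPMF n j p - binomPMF n (j + 1) p) = binomPMF n k p := by
    have := sum_Ico_sub (fun j => -binomPMF n j p) (by omega : k ≤ n + 1)
    simp only [neg_sub_neg] at this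
    rw [this, binomPMF_eq_zero_of_lt (Nat.lt_succ_self n)]
    ring
  rw [htail, ← htel, mul_sum]
  exact HasDerivAt.fun_sum fun j _ => hasDerivAt_binomPMF_succ n j p

lemma integral_binomPMF {n k : ℕ} (hk : k ≤ n) (a b : ℝ) :
    ∫ t in a..b, (n + 1) * binomPMF n k t =
      binomTail (n + 1) (k + 1) b - binomTail (n + 1) (k + 1) a :=
  intervalIntegral.integral_eq_sub_of_hasDerivAt (fun t _ => hasDerivAt_binomTail_succ hk t)
    (((continuous_binomPMF n k).const_mul _).intervalIntegrable _ _)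

lemma binomTail_mono {n k : ℕ} (hk : k ≤ n) {a b : ℝ} (ha : 0 ≤ a) (hab : a ≤ b) (hb : b ≤ 1) :
    binomTail (n + 1) (k + 1) a ≤ binomTail (n + 1) (k + 1) b := by
  rw [← sub_nonneg, ← integral_binomPMF hk]
  refine intervalIntegral.integral_nonneg hab fun t ht => ?_
  have := binomPMF_nonneg n k (ha.trans ht.1) (ht.2.trans hb)
  positivity

section Beta

variable {r s : ℝ}

lemma intervalIntegrable_betaIntegrand (hr : 0 < r) (hs : 0 < s) :
    IntervalIntegrable (fun t : ℝ => t ^ (r - 1) * (1 - t) ^ (s - 1)) volume 0 1 := by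
  have hC := Complex.betaIntegral_convergent (u := r) (v := s) (by simpa) (by simpa)
  rw [intervalIntegrable_iff_integrableOn_Ioc_of_le zero_le_one] at hC ⊢
  refine IntegrableOn.congr_fun hC.re (fun t ht => ?_) measurableSet_Ioc
  have hcast : ((t ^ (r - 1) * (1 - t) ^ (s - 1) : ℝ) : ℂ) =
      (t : ℂ) ^ ((r : ℂ) - 1) * (1 - (t : ℂ)) ^ ((s : ℂ) - 1) := by
    rw [Complex.ofReal_mul, Complex.ofReal_cpow ht.1.le, Complex.ofReal_cpow (by linarith [ht.2])]
    push_cast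
    rfl
  rw [RCLike.re_to_complex, ← hcast, Complex.ofReal_re]

lemma betaFun_pos (hr : 0 < r) (hs : 0 < s) : 0 < betaFun r s :=
  intervalIntegral.intervalIntegral_pos_of_pos_on (intervalIntegrable_betaIntegrand hr hs)
    (fun _ ht => mul_pos (Real.rpow_pos_of_pos ht.1 _)
      (Real.rpow_pos_of_pos (sub_pos.mpr ht.2) _))
    zero_lt_one

lemma betaPDF_nonneg (hr : 0 < r) (hs : 0 < s) {t : ℝ} (h0 : 0 ≤ t) (h1 : t ≤ 1) :
    0 ≤ betaPDF r s t :=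
  div_nonneg (mul_nonneg (Real.rpow_nonneg h0 _) (Real.rpow_nonneg (by linarith) _))
    (betaFun_pos hr hs).le

lemma intervalIntegrable_betaPDF (hr : 0 < r) (hs : 0 < s) :
    IntervalIntegrable (betaPDF r s) volume 0 1 :=
  (intervalIntegrable_betaIntegrand hr hs).div_const _

lemma integral_betaPDF (hr : 0 < r) (hs : 0 < s) : ∫ t in (0:ℝ)..1, betaPDF r s t = 1 := by
  simp only [betaPDF]
  rw [intervalIntegral.integral_div]
  exact div_self (betaFun_pos hr hs).ne'

end Beta

section NatParameters

variable {n k : ℕ} {r s : ℝ}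

lemma integral_betaIntegrand_of_natCast (hk : k ≤ n) (hr : r = k + 1) (hs : s = n - k + 1)
    (a b : ℝ) :
    ∫ t in a..b, t ^ (r - 1) * (1 - t) ^ (s - 1) =
      (binomTail (n + 1) (k + 1) b - binomTail (n + 1) (k + 1) a) / ((n + 1) * n.choose k) := by
  have hc : ((n : ℝ) + 1) * n.choose k ≠ 0 := by
    have := Nat.choose_pos hk
    positivity
  rw [← integral_binomPMF hk, eq_div_iff hc, ← intervalIntegral.integral_mul_const]
  congr 1 with t
  rw [hr, hs, show (k : ℝ) + 1 - 1 = (k : ℕ) by ring,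
    show (n : ℝ) - k + 1 - 1 = ((n - k : ℕ) : ℝ) by push_cast [hk]; ring,
    Real.rpow_natCast, Real.rpow_natCast, binomPMF]
  ring

lemma betaCDF_eq_binomTail (hk : k ≤ n) (hr : r = k + 1) (hs : s = n - k + 1) (p : ℝ) :
    betaCDF r s p = binomTail (n + 1) (k + 1) p := by
  have hc : (n.choose k : ℝ) ≠ 0 := mod_cast (Nat.choose_pos hk).ne'
  rw [betaCDF]
  simp only [betaPDF]
  rw [intervalIntegral.integral_div, betaFun, integral_betaIntegrand_of_natCast hk hr hs,
    integral_betaIntegrand_of_natCast hk hr hs, binomTail_one (by omega),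
    binomTail_zero (Nat.succ_pos k), sub_zero, sub_zero]
  field_simp

lemma betaQuantile_spec {q : ℝ} (h : ∃ t ∈ Set.Ioo 0 1, betaCDF r s t = q) :
    betaQuantile r s q ∈ Set.Ioo 0 1 ∧ betaCDF r s (betaQuantile r s q) = q := by
  rw [betaQuantile, dif_pos h]
  exact h.choose_spec

lemma betaQuantile_mem_Ioo_and_binomTail_eq (hk : k ≤ n) (hr : r = k + 1) (hs : s = n - k + 1)
    {q : ℝ} (hq : q ∈ Set.Ioo 0 1) :
    betaQuantile r s q ∈ Set.Ioo 0 1 ∧ binomTail (n + 1) (k + 1) (betaQuantile r s q) = q := by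
  rw [← betaCDF_eq_binomTail hk hr hs]
  refine betaQuantile_spec ?_
  have hivt :=
    intermediate_value_Ioo zero_le_one (continuous_binomTail (n + 1) (k + 1)).continuousOn
  rw [binomTail_zero (Nat.succ_pos k), binomTail_one (by omega)] at hivt
  obtain ⟨t, ht, htq⟩ := hivt hq
  exact ⟨t, ht, by rw [betaCDF_eq_binomTail hk hr hs, htq]⟩

end NatParameters

section ClopperPearson

variable {n : ℕ} {α p : ℝ}

lemma sum_range_binomPMF_le_of_cpUpper_lt {X : ℕ} (hα : α ∈ Set.Ioo 0 1) (hXn : X ≤ n)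
    (hp : p ≤ 1) (hX : cpUpper n X α < p) :
    ∑ j ∈ range (X + 1), binomPMF n j p ≤ α / 2 := by
  have hXne : X ≠ n := by
    rintro rfl
    rw [cpUpper, if_pos rfl] at hX
    linarith
  rw [cpUpper, if_neg hXne] at hX
  obtain ⟨m, rfl⟩ : ∃ m, n = m + 1 := ⟨n - 1, by omega⟩
  obtain ⟨⟨ht0, -⟩, ht⟩ := betaQuantile_mem_Ioo_and_binomTail_eq (n := m) (k := X)
    (r := X + 1) (s := ((m + 1 : ℕ) : ℝ) - X) (by omega) rfl (by push_cast; ring)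
    (q := 1 - α / 2) ⟨by linarith [hα.2], by linarith [hα.1]⟩
  have hmono := binomTail_mono (n := m) (k := X) (by omega) ht0.le hX.le hp
  have hsum := sum_range_add_binomTail (by omega : X + 1 ≤ m + 1 + 1) p
  linarith

lemma binomTail_le_of_lt_cpLower {X : ℕ} (hα : α ∈ Set.Ioo 0 1) (hXn : X ≤ n) (hp : 0 ≤ p)
    (hX : p < cpLower n X α) :
    binomTail n X p ≤ α / 2 := by
  have hX0 : X ≠ 0 := by
    rintro rfl
    rw [cpLower, if_pos rfl] at hX
    linarith
  rw [cpLower, if_neg hX0] at hX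
  obtain ⟨k, rfl⟩ : ∃ k, X = k + 1 := ⟨X - 1, by omega⟩
  obtain ⟨m, rfl⟩ : ∃ m, n = m + 1 := ⟨n - 1, by omega⟩
  obtain ⟨⟨-, ht1⟩, ht⟩ := betaQuantile_mem_Ioo_and_binomTail_eq (n := m) (k := k)
    (r := ((k + 1 : ℕ) : ℝ)) (s := ((m + 1 : ℕ) : ℝ) - ((k + 1 : ℕ) : ℝ) + 1) (by omega)
    (by push_cast; ring) (by push_cast; ring) (q := α / 2) ⟨by linarith [hα.1], by linarith [hα.2]⟩
  linarith [binomTail_mono (n := m) (k := k) (by omega) hp hX.le ht1.le]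

lemma sum_binomPMF_filter_cpUpper_lt_le (hα : α ∈ Set.Ioo 0 1) (h0 : 0 ≤ p) (h1 : p ≤ 1) :
    ∑ X ∈ range (n + 1) with cpUpper n X α < p, binomPMF n X p ≤ α / 2 := by
  set S := {X ∈ range (n + 1) | cpUpper n X α < p}
  rcases S.eq_empty_or_nonempty with hS | hS
  · rw [hS, sum_empty]
    linarith [hα.1]
  obtain ⟨hmax_range, hmax⟩ := mem_filter.mp (S.max'_mem hS)
  calc ∑ X ∈ S, binomPMF n X p
      ≤ ∑ X ∈ range (S.max' hS + 1), binomPMF n X p :=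
        sum_le_sum_of_subset_of_nonneg
          (fun X hX => mem_range_succ_iff.mpr (S.le_max' X hX))
          (fun X _ _ => binomPMF_nonneg n X h0 h1)
    _ ≤ α / 2 :=
        sum_range_binomPMF_le_of_cpUpper_lt hα (mem_range_succ_iff.mp hmax_range) h1 hmax

lemma sum_binomPMF_filter_lt_cpLower_le (hα : α ∈ Set.Ioo 0 1) (h0 : 0 ≤ p) (h1 : p ≤ 1) :
    ∑ X ∈ range (n + 1) with p < cpLower n X α, binomPMF n X p ≤ α / 2 := by
  set S := {X ∈ range (n + 1) | p < cpLower n X α}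
  rcases S.eq_empty_or_nonempty with hS | hS
  · rw [hS, sum_empty]
    linarith [hα.1]
  obtain ⟨hmin_range, hmin⟩ := mem_filter.mp (S.min'_mem hS)
  calc ∑ X ∈ S, binomPMF n X p
      ≤ binomTail n (S.min' hS) p :=
        sum_le_sum_of_subset_of_nonneg
          (fun X hX => mem_Ico.mpr ⟨S.min'_le X hX, mem_range.mp (mem_filter.mp hX).1⟩)
          (fun X _ _ => binomPMF_nonneg n X h0 h1)
    _ ≤ α / 2 :=
        binomTail_le_of_lt_cpLower hα (mem_range_succ_iff.mp hmin_range) h0 hmin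

noncomputable def cpCoverage (n : ℕ) (α p : ℝ) : ℝ :=
  ∑ X ∈ range (n + 1), if cpLower n X α ≤ p ∧ p ≤ cpUpper n X α then binomPMF n X p else 0

lemma one_sub_le_cpCoverage (hα : α ∈ Set.Ioo 0 1) (h0 : 0 ≤ p) (h1 : p ≤ 1) :
    1 - α ≤ cpCoverage n α p := by
  have hterm : ∀ X ∈ range (n + 1), binomPMF n X p ≤
      (if cpLower n X α ≤ p ∧ p ≤ cpUpper n X α then binomPMF n X p else 0) +
        (if cpUpper n X α < p then binomPMF n X p else 0) +
        (if p < cpLower n X α then binomPMF n X p else 0) := by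
    intro X _
    have := binomPMF_nonneg n X h0 h1
    split_ifs <;> first | linarith | grind
  have hsum := sum_le_sum hterm
  rw [sum_binomPMF, sum_add_distrib, sum_add_distrib] at hsum
  change 1 ≤ cpCoverage n α p + _ + _ at hsum
  rw [← sum_filter, ← sum_filter] at hsum
  linarith [sum_binomPMF_filter_cpUpper_lt_le hα h0 h1 (n := n),
    sum_binomPMF_filter_lt_cpLower_le hα h0 h1 (n := n)]

lemma cpCoverage_mem_Icc (h0 : 0 ≤ p) (h1 : p ≤ 1) : cpCoverage n α p ∈ Set.Icc 0 1 := by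
  refine ⟨sum_nonneg fun X _ => ?_, (sum_binomPMF n p).symm ▸ sum_le_sum fun X _ => ?_⟩ <;>
    split_ifs <;> simp [binomPMF_nonneg n X h0 h1]

lemma measurable_cpCoverage (n : ℕ) (α : ℝ) : Measurable (cpCoverage n α) :=
  Finset.measurable_sum _ fun X _ =>
    Measurable.ite measurableSet_Icc (continuous_binomPMF n X).measurable measurable_const

end ClopperPearson

lemma intervalIntegrable_cpCoverage_mul {n : ℕ} {α : ℝ} {f : ℝ → ℝ}
    (hf : IntervalIntegrable f volume 0 1) :
    IntervalIntegrable (fun p => cpCoverage n α p * f p) volume 0 1 := by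
  rw [intervalIntegrable_iff_integrableOn_Ioc_of_le zero_le_one] at hf ⊢
  refine hf.bdd_mul (c := 1) (measurable_cpCoverage n α).aestronglyMeasurable ?_
  refine (ae_restrict_iff' measurableSet_Ioc).mpr (Filter.Eventually.of_forall fun p hp => ?_)
  obtain ⟨hcov0, hcov1⟩ := cpCoverage_mem_Icc (n := n) (α := α) hp.1.le hp.2
  rwa [Real.norm_eq_abs, abs_of_nonneg hcov0]

theorem meanCoverage_ge_general (n : ℕ) (α : ℝ) (hα : α ∈ Set.Ioo (0:ℝ) 1)
    (r s : ℝ) (hr : 0 < r) (hs : 0 < s) :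
    1 - α ≤ meanCoverage α n r s := by
  have hpdf := intervalIntegrable_betaPDF hr hs
  calc 1 - α = ∫ p in (0:ℝ)..1, (1 - α) * betaPDF r s p := by
        rw [intervalIntegral.integral_const_mul, integral_betaPDF hr hs, mul_one]
    _ ≤ ∫ p in (0:ℝ)..1, cpCoverage n α p * betaPDF r s p :=
        intervalIntegral.integral_mono_on zero_le_one (hpdf.const_mul _)
          (intervalIntegrable_cpCoverage_mul hpdf) fun p hp =>
            mul_le_mul_of_nonneg_right (one_sub_le_cpCoverage hα hp.1 hp.2)
              (betaPDF_nonneg hr hs hp.1 hp.2)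
    _ = meanCoverage α n r s := rfl

/-- The mean coverage of the exact level-(1-α) Clopper–Pearson interval is at least `1 - α`. -/
theorem meanCoverage_ge (n : ℕ) (hn : 1 ≤ n) (α : ℝ) (hα : α ∈ Set.Ioo (0:ℝ) 1)
    (r s : ℝ) (hr : 0 < r) (hs : 0 < s) :
    1 - α ≤ meanCoverage α n r s :=
  meanCoverage_ge_general n α hα r s hr hs
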